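/- Let μ : ℝ → ℝ be a nonnegative locally integrable function, let k ≥ 1 be an integer, let T > 0, let M ≥ 1, and set Δ = T/M with breakpoints τ_m = m·Δ. For a = (a_1, …, a_M) with all a_m ≥ 0, let λ_a(t) = Σ_{m=1}^M a_m · 1[τ_{m-1} ≤ t < τ_m]. Then the function a ↦ ∫_0^T f_k(t; λ_a, μ) dt is concave on the nonnegative orthant {a ∈ ℝ^M : a_m ≥ 0 for all m}, and for each fixed t the function a ↦ f_k(t; λ_a, μ) is concave on the same set. -/

import Mathlib

open MeasureTheory Real Set Filter Topology intervalIntegral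

/-- The upper incomplete Gamma function `Γ(k, x) = ∫_x^∞ s^{k-1} e^{-s} ds`. -/
noncomputable def uGamma (k : ℕ) (x : ℝ) : ℝ :=
  ∫ s in Set.Ioi x, s ^ (k - 1) * Real.exp (-s)

/-- `f_k(t; λ, μ) = (1/(k-1)!) ∫_0^t λ(τ) exp(-∫_τ^t λ) Γ(k, ∫_τ^t μ) dτ`. -/
noncomputable def fk (k : ℕ) (lam mu : ℝ → ℝ) (t : ℝ) : ℝ :=
  (1 / (Nat.factorial (k - 1) : ℝ)) *
    ∫ τ in (0:ℝ)..t,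
      lam τ * Real.exp (-∫ x in τ..t, lam x) * uGamma k (∫ x in τ..t, mu x)

/-!
Writing `Γ(k, m) = ∫_{s > m} s^{k-1} e^{-s} ds` and exchanging the order of integration gives
`(k-1)! f_k(t; λ, μ) = ∫_{s > 0} s^{k-1} e^{-s} ∫_{τ ∈ (0,t], ∫_τ^t μ < s} λ(τ) e^{-∫_τ^t λ} dτ ds`.
As `τ ↦ ∫_τ^t μ` is antitone, for fixed `s` the inner domain is, up to a null set, an interval
`(c, t]` independent of `λ`, on which the inner integral is `1 - exp (-∫_c^t λ)` by the
fundamental theorem of calculus for absolutely continuous functions. This is concave in `λ` by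
convexity of `exp`, so `f_k(t; ·, μ)` is concave on locally integrable rates for every `t ≥ 0`,
and so is its integral in `t`. For `t < 0`, `f_k(t; λ_a, μ) = 0` since `λ_a` vanishes on `(-∞, 0)`.
-/

namespace MeasureTheory.LocallyIntegrable

variable {f : ℝ → ℝ}

theorem intervalIntegrable (hf : LocallyIntegrable f) (a b : ℝ) :
    IntervalIntegrable f volume a b :=
  (hf.integrableOn_isCompact isCompact_uIcc).intervalIntegrable

theorem continuous_intervalIntegral (hf : LocallyIntegrable f) :
    Continuous fun p : ℝ × ℝ ↦ ∫ x in p.1..p.2, f x := by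
  have hP := continuous_primitive (fun a b ↦ hf.intervalIntegrable a b) 0
  refine ((hP.comp continuous_snd).sub (hP.comp continuous_fst)).congr fun p ↦ ?_
  exact integral_interval_sub_left (hf.intervalIntegrable _ _) (hf.intervalIntegrable _ _)

theorem continuous_intervalIntegral_left (hf : LocallyIntegrable f) (b : ℝ) :
    Continuous fun a ↦ ∫ x in a..b, f x :=
  hf.continuous_intervalIntegral.comp (continuous_id.prodMk continuous_const)

theorem antitone_intervalIntegral_left (hf : LocallyIntegrable f) (hf0 : ∀ x, 0 ≤ f x) (b : ℝ) :
    Antitone fun a ↦ ∫ x in a..b, f x := fun a a' haa' ↦ by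
  dsimp only
  rw [← integral_add_adjacent_intervals (hf.intervalIntegrable a a') (hf.intervalIntegrable a' b)]
  exact le_add_of_nonneg_left (intervalIntegral.integral_nonneg haa' fun x _ ↦ hf0 x)

end MeasureTheory.LocallyIntegrable

theorem LipschitzOnWith.comp_absolutelyContinuousOnInterval {X Y : Type*} [PseudoMetricSpace X]
    [PseudoMetricSpace Y] {g : X → Y} {f : ℝ → X} {K : NNReal} {s : Set X} {a b : ℝ}
    (hg : LipschitzOnWith K g s) (hf : AbsolutelyContinuousOnInterval f a b)
    (hfs : MapsTo f (uIcc a b) s) : AbsolutelyContinuousOnInterval (g ∘ f) a b := by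
  unfold AbsolutelyContinuousOnInterval at hf ⊢
  refine squeeze_zero' (Eventually.of_forall fun _ ↦ Finset.sum_nonneg fun _ _ ↦ dist_nonneg)
    ?_ (by simpa using hf.const_mul (K : ℝ))
  rw [eventually_inf_principal]
  filter_upwards with E hE
  rw [Finset.mul_sum]
  gcongr with i hi
  exact hg.dist_le_mul _ (hfs (hE.1 i hi).1) _ (hfs (hE.1 i hi).2)

theorem LocallyLipschitz.comp_absolutelyContinuousOnInterval {F Y : Type*} [NormedAddCommGroup F]
    [PseudoMetricSpace Y] {g : F → Y} {f : ℝ → F} {a b : ℝ}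
    (hg : LocallyLipschitz g) (hf : AbsolutelyContinuousOnInterval f a b) :
    AbsolutelyContinuousOnInterval (g ∘ f) a b := by
  obtain ⟨K, hK⟩ := hg.locallyLipschitzOn.exists_lipschitzOnWith_of_compact
    (isCompact_uIcc.image_of_continuousOn hf.continuousOn)
  exact hK.comp_absolutelyContinuousOnInterval hf (mapsTo_image f _)

theorem integral_mul_exp_neg_integral {f : ℝ → ℝ} {a b : ℝ}
    (hf : IntervalIntegrable f volume a b) :
    ∫ x in a..b, f x * exp (-∫ y in x..b, f y) = 1 - exp (-∫ y in a..b, f y) := by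
  set F : ℝ → ℝ := fun x ↦ ∫ y in b..x, f y
  have hF : ∀ x, exp (F x) = exp (-∫ y in x..b, f y) := fun x ↦ by
    simp only [F, integral_symm x b]
  have hexpF : AbsolutelyContinuousOnInterval (exp ∘ F) a b :=
    LocallyLipschitz.comp_absolutelyContinuousOnInterval (contDiff_exp (n := 1)).locallyLipschitz
      (hf.absolutelyContinuousOnInterval_intervalIntegral right_mem_uIcc)
  calc ∫ x in a..b, f x * exp (-∫ y in x..b, f y)
      = ∫ x in a..b, deriv (exp ∘ F) x := by
        refine integral_congr_ae ?_
        filter_upwards [hf.ae_hasDerivAt_integral] with x hx hxab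
        have hderiv : HasDerivAt (exp ∘ F) (exp (F x) * f x) x :=
          (hx (uIoc_subset_uIcc hxab) b right_mem_uIcc).exp
        rw [← hF, hderiv.deriv, mul_comm]
    _ = exp (F b) - exp (F a) := hexpF.integral_deriv_eq_sub
    _ = 1 - exp (-∫ y in a..b, f y) := by rw [hF, hF, integral_same, neg_zero, exp_zero]

theorem IsUpperSet.exists_Ioc_inter_ae_eq_Ioc {U : Set ℝ} (hU : IsUpperSet U) {a b : ℝ}
    (hab : a ≤ b) : ∃ c ∈ Icc a b, (Ioc a b ∩ U : Set ℝ) =ᵐ[volume] Ioc c b := by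
  set S := Ioc a b ∩ U
  rcases S.eq_empty_or_nonempty with hS | hS
  · exact ⟨b, right_mem_Icc.2 hab, by rw [hS, Ioc_self]; rfl⟩
  have hbdd : BddBelow S := ⟨a, fun x hx ↦ hx.1.1.le⟩
  obtain ⟨x, hx⟩ := hS
  refine ⟨sInf S, ⟨le_csInf ⟨x, hx⟩ fun y hy ↦ hy.1.1.le, (csInf_le hbdd hx).trans hx.1.2⟩, ?_⟩
  have hIoc : Ioc (sInf S) b ⊆ S := fun y hy ↦ by
    obtain ⟨z, hz, hzy⟩ := exists_lt_of_csInf_lt ⟨x, hx⟩ hy.1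
    exact ⟨⟨hz.1.1.trans hzy, hy.2⟩, hU hzy.le hz.2⟩
  have hIcc : S ⊆ Icc (sInf S) b := fun y hy ↦ ⟨csInf_le hbdd hy, hy.1.2⟩
  exact (hIcc.eventuallyLE.trans Ioc_ae_eq_Icc.symm.le).antisymm hIoc.eventuallyLE

theorem ConcaveOn.integral {α E : Type*} [MeasurableSpace α] {μ : Measure α} [AddCommMonoid E]
    [Module ℝ E] {S : Set E} {F : E → α → ℝ} (hS : Convex ℝ S)
    (hF : ∀ᵐ a ∂μ, ConcaveOn ℝ S fun x ↦ F x a) (hint : ∀ x ∈ S, Integrable (F x) μ) :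
    ConcaveOn ℝ S fun x ↦ ∫ a, F x a ∂μ := by
  refine ⟨hS, fun x hx y hy p q hp hq hpq ↦ ?_⟩
  simp only [smul_eq_mul]
  rw [← MeasureTheory.integral_const_mul, ← MeasureTheory.integral_const_mul,
    ← integral_add ((hint x hx).const_mul p) ((hint y hy).const_mul q)]
  exact integral_mono_ae (((hint x hx).const_mul p).add ((hint y hy).const_mul q))
    (hint _ (hS hx hy hp hq hpq)) (hF.mono fun a ha ↦ ha.2 hx hy hp hq hpq)

theorem convex_setOf_locallyIntegrable : Convex ℝ {f : ℝ → ℝ | LocallyIntegrable f} :=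
  fun _ hf _ hg p q _ _ _ ↦ (hf.smul p).add (hg.smul q)

theorem concaveOn_one_sub_exp_neg_intervalIntegral (a b : ℝ) :
    ConcaveOn ℝ {f : ℝ → ℝ | IntervalIntegrable f volume a b}
      fun f ↦ 1 - exp (-∫ x in a..b, f x) := by
  refine ⟨fun _ hf _ hg p q _ _ _ ↦ (hf.smul p).add (hg.smul q), fun f hf g hg p q hp hq hpq ↦ ?_⟩
  have hlin :
      ∫ x in a..b, (p • f + q • g) x = p * (∫ x in a..b, f x) + q * ∫ x in a..b, g x := by
    simp only [Pi.add_apply, Pi.smul_apply, smul_eq_mul]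
    rw [integral_add (hf.const_mul p) (hg.const_mul q), intervalIntegral.integral_const_mul,
      intervalIntegral.integral_const_mul]
  have hexp := convexOn_exp.2 (mem_univ (-∫ x in a..b, f x)) (mem_univ (-∫ x in a..b, g x))
    hp hq hpq
  simp only [smul_eq_mul, hlin] at hexp ⊢
  rw [neg_add, ← mul_neg, ← mul_neg]
  linarith

theorem integrableOn_pow_mul_exp_neg_Ioi (n : ℕ) :
    IntegrableOn (fun s : ℝ ↦ s ^ n * exp (-s)) (Ioi 0) := by
  simpa [mul_comm] using GammaIntegral_convergent (s := n + 1) (by positivity)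

section uGamma

variable {k : ℕ} {x : ℝ}

theorem uGamma_eq_setIntegral_indicator (hx : 0 ≤ x) :
    uGamma k x = ∫ s in Ioi 0, (Ioi x).indicator (fun s ↦ s ^ (k - 1) * exp (-s)) s := by
  rw [setIntegral_indicator measurableSet_Ioi, Ioi_inter_Ioi, max_eq_right hx, uGamma]

theorem uGamma_nonneg (hx : 0 ≤ x) : 0 ≤ uGamma k x :=
  setIntegral_nonneg measurableSet_Ioi fun _ hs ↦
    mul_nonneg (pow_nonneg (hx.trans (le_of_lt hs)) _) (exp_pos _).le

theorem uGamma_le_uGamma_zero (hx : 0 ≤ x) : uGamma k x ≤ uGamma k 0 :=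
  setIntegral_mono_set (integrableOn_pow_mul_exp_neg_Ioi _)
    (ae_restrict_of_forall_mem measurableSet_Ioi fun _ hs ↦
      mul_nonneg (pow_nonneg (le_of_lt hs) _) (exp_pos _).le)
    (Ioi_subset_Ioi hx).eventuallyLE

variable (k) in
theorem measurable_uGamma : Measurable (uGamma k) := by
  have hmeas :
      Measurable ({p : ℝ × ℝ | p.1 < p.2}.indicator fun p ↦ p.2 ^ (k - 1) * exp (-p.2)) :=
    (by fun_prop : Measurable fun p : ℝ × ℝ ↦ p.2 ^ (k - 1) * exp (-p.2)).indicator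
      (measurableSet_lt measurable_fst measurable_snd)
  convert hmeas.stronglyMeasurable.integral_prod_right' (ν := volume).measurable using 1
  ext x
  rw [uGamma, ← MeasureTheory.integral_indicator measurableSet_Ioi]
  rfl

end uGamma

noncomputable def fkDoubleIntegrand (k : ℕ) (lam mu : ℝ → ℝ) (t : ℝ) : ℝ × ℝ → ℝ :=
  {p : ℝ × ℝ | ∫ x in p.1..t, mu x < p.2}.indicator fun p ↦
    lam p.1 * exp (-∫ x in p.1..t, lam x) * (p.2 ^ (k - 1) * exp (-p.2))

section fkDoubleIntegrand

variable {k : ℕ} {lam mu : ℝ → ℝ} {t : ℝ}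

theorem integrable_fkDoubleIntegrand (hlam : LocallyIntegrable lam) (hmu : LocallyIntegrable mu) :
    Integrable (fkDoubleIntegrand k lam mu t)
      ((volume.restrict (Ioc 0 t)).prod (volume.restrict (Ioi 0))) := by
  have hsurv : IntegrableOn (fun τ ↦ lam τ * exp (-∫ x in τ..t, lam x)) (Ioc 0 t) :=
    ((hlam.integrableOn_isCompact isCompact_Icc).mul_continuousOn
      (hlam.continuous_intervalIntegral_left t).neg.rexp.continuousOn isCompact_Icc).mono_set
      Ioc_subset_Icc_self
  exact (hsurv.integrable.mul_prod (integrableOn_pow_mul_exp_neg_Ioi (k - 1)).integrable).indicator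
    (measurableSet_lt ((hmu.continuous_intervalIntegral_left t).measurable.comp measurable_fst)
      measurable_snd)

theorem intervalIntegral_fk_eq_integral_fkDoubleIntegrand (hmu0 : ∀ x, 0 ≤ mu x)
    (hlam : LocallyIntegrable lam) (hmu : LocallyIntegrable mu) (ht : 0 ≤ t) :
    ∫ τ in 0..t, lam τ * exp (-∫ x in τ..t, lam x) * uGamma k (∫ x in τ..t, mu x) =
      ∫ s in Ioi 0, ∫ τ in Ioc 0 t, fkDoubleIntegrand k lam mu t (τ, s) := by
  rw [integral_of_le ht,
    ← integral_integral_swap (f := fun τ s ↦ fkDoubleIntegrand k lam mu t (τ, s))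
      (integrable_fkDoubleIntegrand hlam hmu)]
  refine setIntegral_congr_fun measurableSet_Ioc fun τ hτ ↦ ?_
  rw [uGamma_eq_setIntegral_indicator (intervalIntegral.integral_nonneg hτ.2 fun x _ ↦ hmu0 x),
    ← MeasureTheory.integral_const_mul]
  congr 1 with s
  simp only [fkDoubleIntegrand, indicator, mem_ofPred_eq, mem_Ioi]
  split_ifs <;> ring

theorem exists_integral_fkDoubleIntegrand_eq (hmu0 : ∀ x, 0 ≤ mu x) (hmu : LocallyIntegrable mu)
    (ht : 0 ≤ t) (s : ℝ) : ∃ c, ∀ lam, LocallyIntegrable lam →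
      ∫ τ in Ioc 0 t, fkDoubleIntegrand k lam mu t (τ, s) =
        s ^ (k - 1) * exp (-s) * (1 - exp (-∫ x in c..t, lam x)) := by
  set U := {τ | ∫ x in τ..t, mu x < s}
  have hU : IsUpperSet U := fun τ τ' hττ' hτ ↦
    (hmu.antitone_intervalIntegral_left hmu0 t hττ').trans_lt hτ
  obtain ⟨c, hc, hcU⟩ := hU.exists_Ioc_inter_ae_eq_Ioc ht
  refine ⟨c, fun lam hlam ↦ ?_⟩
  have hUmeas : MeasurableSet U :=
    measurableSet_lt (hmu.continuous_intervalIntegral_left t).measurable measurable_const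
  calc ∫ τ in Ioc 0 t, fkDoubleIntegrand k lam mu t (τ, s)
      = ∫ τ in Ioc 0 t ∩ U, lam τ * exp (-∫ x in τ..t, lam x) * (s ^ (k - 1) * exp (-s)) := by
        rw [← setIntegral_indicator hUmeas]
        rfl
    _ = (∫ τ in c..t, lam τ * exp (-∫ x in τ..t, lam x)) * (s ^ (k - 1) * exp (-s)) := by
        rw [setIntegral_congr_set hcU, MeasureTheory.integral_mul_const, integral_of_le hc.2]
    _ = s ^ (k - 1) * exp (-s) * (1 - exp (-∫ x in c..t, lam x)) := by
        rw [integral_mul_exp_neg_integral (hlam.intervalIntegrable c t), mul_comm]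

end fkDoubleIntegrand

theorem concaveOn_fk {mu : ℝ → ℝ} (hmu0 : ∀ x, 0 ≤ mu x) (hmu : LocallyIntegrable mu) (k : ℕ)
    {t : ℝ} (ht : 0 ≤ t) :
    ConcaveOn ℝ {lam : ℝ → ℝ | LocallyIntegrable lam} fun lam ↦ fk k lam mu t := by
  have hlayer : ∀ᵐ s ∂(volume.restrict (Ioi 0)),
      ConcaveOn ℝ {lam : ℝ → ℝ | LocallyIntegrable lam}
        fun lam ↦ ∫ τ in Ioc 0 t, fkDoubleIntegrand k lam mu t (τ, s) := by
    refine ae_restrict_of_forall_mem measurableSet_Ioi fun s hs ↦ ?_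
    obtain ⟨c, hc⟩ := exists_integral_fkDoubleIntegrand_eq (k := k) hmu0 hmu ht s
    refine ConcaveOn.congr ?_ fun lam hlam ↦ (hc lam hlam).symm
    exact ((concaveOn_one_sub_exp_neg_intervalIntegral c t).subset
      (fun lam hlam ↦ hlam.intervalIntegrable c t) convex_setOf_locallyIntegrable).smul
      (mul_nonneg (pow_nonneg (le_of_lt hs) _) (exp_pos _).le)
  refine ConcaveOn.congr ?_ fun lam hlam ↦
    (congrArg _ (intervalIntegral_fk_eq_integral_fkDoubleIntegrand hmu0 hlam hmu ht)).symm
  exact (ConcaveOn.integral convex_setOf_locallyIntegrable hlayer fun lam hlam ↦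
    (integrable_fkDoubleIntegrand hlam hmu).integral_prod_right).smul (by positivity)

section fkBounds

variable {k : ℕ} {lam mu : ℝ → ℝ}

theorem fk_eq_zero_of_nonpos (hlam : ∀ x < 0, lam x = 0) {t : ℝ} (ht : t ≤ 0) :
    fk k lam mu t = 0 := by
  rw [fk, integral_symm, integral_of_le ht, integral_Ioc_eq_integral_Ioo,
    setIntegral_eq_zero_of_forall_eq_zero fun x hx ↦ by rw [hlam x hx.2, zero_mul, zero_mul],
    neg_zero, mul_zero]

theorem aestronglyMeasurable_fk (hlam : LocallyIntegrable lam) (hmu : LocallyIntegrable mu) :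
    AEStronglyMeasurable (fk k lam mu) := by
  set G : ℝ × ℝ → ℝ := fun p ↦
    lam p.2 * exp (-∫ x in p.2..p.1, lam x) * uGamma k (∫ x in p.2..p.1, mu x)
  have hG : AEStronglyMeasurable G (volume.prod volume) :=
    (hlam.aestronglyMeasurable.comp_snd.mul
      (hlam.continuous_intervalIntegral.comp continuous_swap).neg.rexp.aestronglyMeasurable).mul
      ((measurable_uGamma k).comp
        (hmu.continuous_intervalIntegral.comp continuous_swap).measurable).aestronglyMeasurable
  have hsection : ∀ {S : Set (ℝ × ℝ)}, MeasurableSet S →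
      AEStronglyMeasurable fun t ↦ ∫ τ, S.indicator G (t, τ) := fun hS ↦
    (hG.indicator hS).integral_prod_right'
  have hS₁ : MeasurableSet {p : ℝ × ℝ | p.2 ∈ Ioc 0 p.1} :=
    (measurableSet_lt measurable_const measurable_snd).inter
      (measurableSet_le measurable_snd measurable_fst)
  have hS₂ : MeasurableSet {p : ℝ × ℝ | p.2 ∈ Ioc p.1 0} :=
    (measurableSet_lt measurable_fst measurable_snd).inter
      (measurableSet_le measurable_snd measurable_const)
  have hfk : fk k lam mu = fun t ↦ 1 / ((k - 1).factorial : ℝ) *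
      ((∫ τ, {p : ℝ × ℝ | p.2 ∈ Ioc 0 p.1}.indicator G (t, τ)) -
        ∫ τ, {p : ℝ × ℝ | p.2 ∈ Ioc p.1 0}.indicator G (t, τ)) := by
    ext t
    rw [fk, intervalIntegral, ← MeasureTheory.integral_indicator measurableSet_Ioc,
      ← MeasureTheory.integral_indicator measurableSet_Ioc]
    rfl
  rw [hfk]
  exact ((hsection hS₁).sub (hsection hS₂)).const_mul _

theorem abs_fk_le (hlam0 : ∀ x, 0 ≤ lam x) (hlam : LocallyIntegrable lam) (hmu0 : ∀ x, 0 ≤ mu x)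
    {t : ℝ} (ht : 0 ≤ t) : |fk k lam mu t| ≤ 1 / ((k - 1).factorial : ℝ) * uGamma k 0 := by
  have hsurv : IntervalIntegrable (fun τ ↦ lam τ * exp (-∫ x in τ..t, lam x)) volume 0 t :=
    (hlam.intervalIntegrable 0 t).mul_continuousOn
      (hlam.continuous_intervalIntegral_left t).neg.rexp.continuousOn
  have hpointwise : ∀ τ ∈ Ioc 0 t,
      ‖lam τ * exp (-∫ x in τ..t, lam x) * uGamma k (∫ x in τ..t, mu x)‖ ≤
        uGamma k 0 * (lam τ * exp (-∫ x in τ..t, lam x)) := fun τ hτ ↦ by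
    have hm : 0 ≤ ∫ x in τ..t, mu x := intervalIntegral.integral_nonneg hτ.2 fun x _ ↦ hmu0 x
    have hsurv0 : 0 ≤ lam τ * exp (-∫ x in τ..t, lam x) := mul_nonneg (hlam0 τ) (exp_pos _).le
    rw [Real.norm_eq_abs, abs_of_nonneg (mul_nonneg hsurv0 (uGamma_nonneg hm)), mul_comm]
    exact mul_le_mul_of_nonneg_right (uGamma_le_uGamma_zero hm) hsurv0
  have hbound := calc
    ‖∫ τ in 0..t, lam τ * exp (-∫ x in τ..t, lam x) * uGamma k (∫ x in τ..t, mu x)‖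
      ≤ ∫ τ in 0..t, uGamma k 0 * (lam τ * exp (-∫ x in τ..t, lam x)) :=
        norm_integral_le_of_norm_le ht (ae_of_all _ hpointwise) (hsurv.const_mul _)
    _ = uGamma k 0 * (1 - exp (-∫ x in 0..t, lam x)) := by
        rw [intervalIntegral.integral_const_mul,
          integral_mul_exp_neg_integral (hlam.intervalIntegrable 0 t)]
    _ ≤ uGamma k 0 := mul_le_of_le_one_right (uGamma_nonneg le_rfl) (sub_le_self _ (exp_pos _).le)
  rw [fk, abs_mul, abs_of_nonneg (by positivity)]
  exact mul_le_mul_of_nonneg_left hbound (by positivity)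

theorem integrableOn_fk_Ioc (hlam0 : ∀ x, 0 ≤ lam x) (hlam : LocallyIntegrable lam)
    (hmu0 : ∀ x, 0 ≤ mu x) (hmu : LocallyIntegrable mu) (T : ℝ) :
    IntegrableOn (fk k lam mu) (Ioc 0 T) :=
  Measure.integrableOn_of_bounded measure_Ioc_lt_top.ne (aestronglyMeasurable_fk hlam hmu)
    (ae_restrict_of_forall_mem measurableSet_Ioc fun _ ht ↦ abs_fk_le hlam0 hlam hmu0 ht.1.le)

end fkBounds

section linearCombination

variable {ι : Type*} [Fintype ι] {χ : ι → ℝ → ℝ} {mu : ℝ → ℝ} (k : ℕ)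

theorem Fintype.linearCombination_apply_apply (a : ι → ℝ) (x : ℝ) :
    Fintype.linearCombination ℝ χ a x = ∑ i, a i * χ i x := by
  simp [Fintype.linearCombination_apply]

theorem locallyIntegrable_linearCombination (hχ : ∀ i, LocallyIntegrable (χ i)) (a : ι → ℝ) :
    LocallyIntegrable (Fintype.linearCombination ℝ χ a) := by
  rw [Fintype.linearCombination_apply]
  exact locallyIntegrable_finsetSum' _ fun i _ ↦ (hχ i).smul (a i)

theorem concaveOn_fk_linearCombination (hχ : ∀ i, LocallyIntegrable (χ i))
    (hχneg : ∀ i, ∀ x < 0, χ i x = 0) (hmu0 : ∀ x, 0 ≤ mu x) (hmu : LocallyIntegrable mu)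
    (t : ℝ) : ConcaveOn ℝ univ fun a ↦ fk k (Fintype.linearCombination ℝ χ a) mu t := by
  rcases le_or_gt 0 t with ht | ht
  · exact ((concaveOn_fk hmu0 hmu k ht).comp_linearMap _).subset
      (fun a _ ↦ locallyIntegrable_linearCombination hχ a) convex_univ
  · refine (concaveOn_const 0 convex_univ).congr fun a _ ↦
      (fk_eq_zero_of_nonpos (fun x hx ↦ ?_) ht.le).symm
    simp [Fintype.linearCombination_apply_apply, hχneg _ x hx]

theorem concaveOn_integral_fk_linearCombination (hχ0 : ∀ i x, 0 ≤ χ i x)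
    (hχ : ∀ i, LocallyIntegrable (χ i)) (hχneg : ∀ i, ∀ x < 0, χ i x = 0) (hmu0 : ∀ x, 0 ≤ mu x)
    (hmu : LocallyIntegrable mu) {T : ℝ} (hT : 0 ≤ T) :
    ConcaveOn ℝ {a : ι → ℝ | ∀ i, 0 ≤ a i}
      fun a ↦ ∫ t in 0..T, fk k (Fintype.linearCombination ℝ χ a) mu t := by
  have hconv : Convex ℝ {a : ι → ℝ | ∀ i, 0 ≤ a i} := convex_Ici 0
  simp only [integral_of_le hT]
  refine ConcaveOn.integral hconv (ae_of_all _ fun t ↦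
    (concaveOn_fk_linearCombination k hχ hχneg hmu0 hmu t).subset (subset_univ _) hconv)
    fun a ha ↦ integrableOn_fk_Ioc (fun x ↦ ?_) (locallyIntegrable_linearCombination hχ a)
      hmu0 hmu T
  rw [Fintype.linearCombination_apply_apply]
  exact Finset.sum_nonneg fun i _ ↦ mul_nonneg (ha i) (hχ0 i x)

end linearCombination

theorem stmt12_general (mu : ℝ → ℝ) (hmu0 : ∀ x, 0 ≤ mu x) (hmuInt : LocallyIntegrable mu)
    (k : ℕ) (T : ℝ) (hT : 0 < T) (M : ℕ)
    (Δ : ℝ) (hΔ : Δ = T / M)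
    (lamOf : (Fin M → ℝ) → ℝ → ℝ)
    (hlamOf : ∀ a x, lamOf a x = ∑ m : Fin M,
      a m * Set.indicator (Set.Ico ((m : ℕ) * Δ) (((m : ℕ) + 1) * Δ)) (fun _ => (1:ℝ)) x) :
    ConcaveOn ℝ {a : Fin M → ℝ | ∀ m, 0 ≤ a m}
        (fun a => ∫ t in (0:ℝ)..T, fk k (lamOf a) mu t) ∧
      ∀ t : ℝ, ConcaveOn ℝ {a : Fin M → ℝ | ∀ m, 0 ≤ a m}
        (fun a => fk k (lamOf a) mu t) := by
  set χ : Fin M → ℝ → ℝ := fun m ↦ (Ico ((m : ℕ) * Δ) (((m : ℕ) + 1) * Δ)).indicator fun _ ↦ 1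
  obtain rfl : lamOf = Fintype.linearCombination ℝ χ := by
    ext a x
    rw [hlamOf, Fintype.linearCombination_apply_apply]
  have hΔ0 : 0 ≤ Δ := hΔ ▸ div_nonneg hT.le M.cast_nonneg
  have hχ0 : ∀ m x, 0 ≤ χ m x := fun m ↦ indicator_nonneg fun _ _ ↦ zero_le_one
  have hχ : ∀ m, LocallyIntegrable (χ m) := fun m ↦
    (locallyIntegrable_const 1).indicator measurableSet_Ico
  have hχneg : ∀ m, ∀ x < 0, χ m x = 0 := fun m x hx ↦
    indicator_of_notMem
      (fun hmem ↦ (hx.trans_le (mul_nonneg m.val.cast_nonneg hΔ0)).not_ge hmem.1) _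
  exact ⟨concaveOn_integral_fk_linearCombination k hχ0 hχ hχneg hmu0 hmuInt hT.le, fun t ↦
    (concaveOn_fk_linearCombination k hχ hχneg hmu0 hmuInt t).subset (subset_univ _)
      (convex_Ici 0)⟩

/-- for `Δ = T/M`, breakpoints `τ_m = m Δ` and
`λ_a(t) = Σ_{m=1}^M a_m · 1[τ_{m-1} ≤ t < τ_m]`, the functions
`a ↦ ∫_0^T f_k(t; λ_a, μ) dt` and (for each fixed `t`) `a ↦ f_k(t; λ_a, μ)` are
concave on the nonnegative orthant of `ℝ^M`. -/
theorem stmt12 (mu : ℝ → ℝ) (hmu0 : ∀ x, 0 ≤ mu x) (hmuInt : LocallyIntegrable mu)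
    (k : ℕ) (hk : 1 ≤ k) (T : ℝ) (hT : 0 < T) (M : ℕ) (hM : 1 ≤ M)
    (Δ : ℝ) (hΔ : Δ = T / M)
    (lamOf : (Fin M → ℝ) → ℝ → ℝ)
    (hlamOf : ∀ a x, lamOf a x = ∑ m : Fin M,
      a m * Set.indicator (Set.Ico ((m : ℕ) * Δ) (((m : ℕ) + 1) * Δ)) (fun _ => (1:ℝ)) x) :
    ConcaveOn ℝ {a : Fin M → ℝ | ∀ m, 0 ≤ a m}
        (fun a => ∫ t in (0:ℝ)..T, fk k (lamOf a) mu t) ∧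
      ∀ t : ℝ, ConcaveOn ℝ {a : Fin M → ℝ | ∀ m, 0 ≤ a m}
        (fun a => fk k (lamOf a) mu t) :=
  stmt12_general mu hmu0 hmuInt k T hT M Δ hΔ lamOf hlamOf
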